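/- Let φ ∈ L²(0,1) with Sφ = Σ a_n n^{−s}. The multiplication operator M_{Sφ} : Dom(M_{Sφ}) → H², where Dom(M_{Sφ}) = {E ∈ H² : Sφ*E ∈ H²} and M_{Sφ}(E) = Sφ*E, is surjective if and only if a_1 ≠ 0 and the inverse 1/Sφ of Sφ in the algebra of formal Dirichlet series is a multiplier of H². -/

import Mathlib

open MeasureTheory ComplexConjugate Filter Set
open scoped ENNReal NNReal

noncomputable section

namespace DilationDirichlet

/-! ## The interval `(0,1)` and dilation systems -/

/-- Lebesgue measure restricted to the interval `(0,1)`. -/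
def M01 : Measure ℝ := volume.restrict (Set.Ioo (0 : ℝ) 1)

/-- The odd, `2`-periodic extension to `ℝ` of a function defined on `(0,1)`. -/
def oddExt (φ : ℝ → ℂ) (x : ℝ) : ℂ :=
  let y := x - 2 * (⌊x / 2⌋ : ℝ)
  if y ≤ 1 then φ y else -φ (2 - y)

/-- The dilation system `φ_n(x) = φ(n x)` of (the odd `2`-periodic extension of)
a function `φ ∈ L²(0,1)`. -/
def dilSys (φ : Lp ℂ 2 M01) (n : ℕ+) : ℝ → ℂ :=
  fun x => oddExt (⇑φ) ((n : ℕ) * x)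

/-- The sine orthonormal basis `e_n(x) = √2 sin(π n x)` of `L²(0,1)`. -/
def esin (n : ℕ) (x : ℝ) : ℂ := ((Real.sqrt 2 * Real.sin (Real.pi * (n : ℝ) * x) : ℝ) : ℂ)

/-- The `L²(0,1)` inner product `⟨f,g⟩ = ∫ f ḡ`, linear in the first variable. -/
def ip01 (f g : ℝ → ℂ) : ℂ := ∫ x, f x * conj (g x) ∂M01

/-- The Dirichlet series `S f = ∑ aₙ n^{-s}` associated to `f ∈ L²(0,1)`, recorded through its
coefficients `aₙ = ⟨f, eₙ⟩`, viewed as an arithmetic function (so that multiplication of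
arithmetic functions is exactly the Dirichlet convolution of Dirichlet series). -/
def SAF (φ : Lp ℂ 2 M01) : ArithmeticFunction ℂ :=
  ⟨fun n => ip01 (⇑φ) (esin n), by simp [ip01, esin]⟩

/-- Membership in the Hardy space `H²` of Dirichlet series: the coefficients are
square-summable. -/
def memH2AF (a : ArithmeticFunction ℂ) : Prop := Summable fun n : ℕ => ‖a n‖ ^ 2

/-- A Dirichlet series is a multiplier of `H²` when (Dirichlet-)multiplication by it
preserves `H²`. -/
def IsMultiplierAF (a : ArithmeticFunction ℂ) : Prop :=
  ∀ b : ArithmeticFunction ℂ, memH2AF b → memH2AF (a * b)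

/-- `⟨f, φ_n⟩` for the dilation system of `φ`. -/
def dilCoef (φ f : Lp ℂ 2 M01) (n : ℕ+) : ℂ := ip01 (⇑f) (dilSys φ n)

/-- The dilation system of `φ` is a Bessel sequence in `L²(0,1)`. -/
def IsBesselDil (φ : Lp ℂ 2 M01) : Prop :=
  ∃ B : ℝ, 0 < B ∧ ∀ f : Lp ℂ 2 M01,
    ∑' n : ℕ+, (‖dilCoef φ f n‖₊ : ℝ≥0∞) ^ 2 ≤ ENNReal.ofReal B * (‖f‖₊ : ℝ≥0∞) ^ 2

/-- The dilation system of `φ` satisfies the lower frame bound in `L²(0,1)`. -/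
def HasLowerFrameDil (φ : Lp ℂ 2 M01) : Prop :=
  ∃ A : ℝ, 0 < A ∧ ∀ f : Lp ℂ 2 M01,
    ENNReal.ofReal A * (‖f‖₊ : ℝ≥0∞) ^ 2 ≤ ∑' n : ℕ+, (‖dilCoef φ f n‖₊ : ℝ≥0∞) ^ 2

/-- The dilation system of `φ` is a frame for `L²(0,1)`. -/
def IsFrameDil (φ : Lp ℂ 2 M01) : Prop :=
  ∃ A B : ℝ, 0 < A ∧ A ≤ B ∧ ∀ f : Lp ℂ 2 M01,
    ENNReal.ofReal A * (‖f‖₊ : ℝ≥0∞) ^ 2 ≤ ∑' n : ℕ+, (‖dilCoef φ f n‖₊ : ℝ≥0∞) ^ 2 ∧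
    ∑' n : ℕ+, (‖dilCoef φ f n‖₊ : ℝ≥0∞) ^ 2 ≤ ENNReal.ofReal B * (‖f‖₊ : ℝ≥0∞) ^ 2

/-- `∑ |cₙ|²` for a finitely supported family of scalars. -/
def sqSum (c : ℕ+ →₀ ℂ) : ℝ := ∑ n ∈ c.support, ‖c n‖ ^ 2

/-- The finite linear combination `∑ cₙ φ_n` of the dilation system. -/
def comboDil (φ : Lp ℂ 2 M01) (c : ℕ+ →₀ ℂ) : ℝ → ℂ :=
  fun x => ∑ n ∈ c.support, c n * dilSys φ n x

/-- The `L²(0,1)` norm of a function. -/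
def L2norm01 (g : ℝ → ℂ) : ℝ := Real.sqrt (∫ x, ‖g x‖ ^ 2 ∂M01)

/-- The dilation system of `φ` is a Riesz sequence in `L²(0,1)`. -/
def IsRieszSeqDil (φ : Lp ℂ 2 M01) : Prop :=
  ∃ A B : ℝ, 0 < A ∧ A ≤ B ∧ ∀ c : ℕ+ →₀ ℂ,
    A * Real.sqrt (sqSum c) ≤ L2norm01 (comboDil φ c) ∧
    L2norm01 (comboDil φ c) ≤ B * Real.sqrt (sqSum c)

/-- The dilation system of `φ` is a Riesz basis for `L²(0,1)`: a Riesz sequence with dense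
linear span. -/
def IsRieszBasisDil (φ : Lp ℂ 2 M01) : Prop :=
  IsRieszSeqDil φ ∧
    ∀ f : Lp ℂ 2 M01, ∀ ε : ℝ, 0 < ε →
      ∃ c : ℕ+ →₀ ℂ, L2norm01 (fun x => f x - comboDil φ c x) < ε

/-- The dilation system of `φ` is an orthonormal sequence in `L²(0,1)`. -/
def IsOrthonormalDil (φ : Lp ℂ 2 M01) : Prop :=
  ∀ m n : ℕ+, ip01 (dilSys φ m) (dilSys φ n) = if m = n then 1 else 0

/-! ## The infinite torus `T^∞` -/

/-- The infinite torus `T^∞`, realized as a countable product of circles. -/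
abbrev TInf := ℕ → AddCircle (1 : ℝ)

/-- The Haar probability measure on the infinite torus. -/
def muT : Measure TInf := Measure.addHaarMeasure ⊤

instance : IsProbabilityMeasure muT :=
  ⟨by simpa [muT] using
    Measure.addHaarMeasure_self (K₀ := (⊤ : TopologicalSpace.PositiveCompacts TInf))⟩

/-- The monomial `w ↦ w^α` on `T^∞` associated with a finitely supported
multi-index `α ∈ ℤ^{(ℕ)}`. -/
def monoT (α : ℕ →₀ ℤ) (w : TInf) : ℂ := ∏ j ∈ α.support, fourier (α j) (w j)

/-- The Fourier coefficient `f̂(α) = ∫_{T^∞} f(w) w^{-α} dw`. -/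
def fcoefT (f : TInf → ℂ) (α : ℕ →₀ ℤ) : ℂ := ∫ w, f w * conj (monoT α w) ∂muT

/-- The multi-index `α(n)` of exponents of the prime factorization `n = p^{α(n)}`,
where the `j`-th coordinate corresponds to the `j`-th prime number. -/
def expIdx (n : ℕ) : ℕ →₀ ℤ :=
  ((Nat.factorization n).mapDomain (Nat.count Nat.Prime)).mapRange
    (fun k : ℕ => (k : ℤ)) (by simp)

/-- Membership in `H^∞(T^∞)`: essentially bounded and all Fourier coefficients with a negative
index vanish. -/
def memHinfT (f : TInf → ℂ) : Prop :=
  MemLp f ⊤ muT ∧ ∀ α : ℕ →₀ ℤ, (∃ j, α j < 0) → fcoefT f α = 0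

/-- Membership in `H²(T^∞)`: square integrable and all Fourier coefficients with a negative
index vanish. -/
def memH2T (f : TInf → ℂ) : Prop :=
  MemLp f 2 muT ∧ ∀ α : ℕ →₀ ℤ, (∃ j, α j < 0) → fcoefT f α = 0

/-- `f ∈ H²(T^∞)` is the Bohr lift of the Dirichlet series with coefficients `a`:
`f̂(α(n)) = aₙ` and all other Fourier coefficients vanish. -/
def IsBohrLiftOf (a : ArithmeticFunction ℂ) (f : TInf → ℂ) : Prop :=
  memH2T f ∧ (∀ n : ℕ+, fcoefT f (expIdx n) = a n) ∧
    ∀ α : ℕ →₀ ℤ, (∀ n : ℕ+, α ≠ expIdx n) → fcoefT f α = 0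

/-! ## `H²` as a Hilbert space of coefficient sequences -/

/-- The Hardy space `H²` of Dirichlet series, as the Hilbert space of square-summable
coefficient sequences. -/
abbrev H2sp := lp (fun _ : ℕ+ => ℂ) 2

/-- The (formal) Dirichlet series attached to an element of `H²`. -/
def toAF (E : H2sp) : ArithmeticFunction ℂ :=
  ⟨fun n => if h : 0 < n then E ⟨n, h⟩ else 0, by simp⟩

/-- The coefficient sequence of the Dirichlet series `n^{-s} * (∑ aₖ k^{-s})`:
Dirichlet convolution by `n^{-s}` shifts coefficients to multiples of `n`. -/
def shiftFun (n : ℕ+) (f : ℕ+ → ℂ) (k : ℕ+) : ℂ :=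
  if h : (n : ℕ) ∣ (k : ℕ) then
    f ⟨(k : ℕ) / (n : ℕ), Nat.div_pos (Nat.le_of_dvd k.2 h) n.2⟩
  else 0

lemma shiftFun_mul (n m : ℕ+) (f : ℕ+ → ℂ) : shiftFun n f (n * m) = f m := by
  have h : (n : ℕ) ∣ ((n * m : ℕ+) : ℕ) := ⟨m, by simp⟩
  rw [shiftFun, dif_pos h]
  congr 1
  apply Subtype.ext
  show ((n * m : ℕ+) : ℕ) / (n : ℕ) = (m : ℕ)
  rw [PNat.mul_coe]
  exact Nat.mul_div_cancel_left _ n.2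

lemma shiftFun_of_not_dvd {n k : ℕ+} (f : ℕ+ → ℂ) (h : ¬ (n : ℕ) ∣ (k : ℕ)) :
    shiftFun n f k = 0 := dif_neg h

lemma not_dvd_of_not_mem_range {n : ℕ+} {k : ℕ+}
    (hk : k ∉ Set.range (fun m : ℕ+ => n * m)) : ¬ (n : ℕ) ∣ (k : ℕ) := by
  intro hdvd
  obtain ⟨m, hm⟩ := hdvd
  have hm0 : 0 < m := by
    rcases Nat.eq_zero_or_pos m with h | h
    · subst h
      simp only [Nat.mul_zero] at hm
      exact absurd hm (Nat.pos_iff_ne_zero.mp k.2)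
    · exact h
  exact hk ⟨⟨m, hm0⟩, by apply Subtype.ext; exact (hm.symm : ((n : ℕ) * m) = (k : ℕ))⟩

lemma mul_left_injective_pnat (n : ℕ+) : Function.Injective (fun m : ℕ+ => n * m) :=
  fun a b h => by
    apply Subtype.ext
    have : (n : ℕ) * a = (n : ℕ) * b := by
      have := congrArg (fun x : ℕ+ => (x : ℕ)) h
      simpa using this
    exact Nat.eq_of_mul_eq_mul_left n.2 this

lemma shiftFun_memℓp (n : ℕ+) (f : H2sp) : Memℓp (shiftFun n ⇑f) 2 := by
  apply memℓp_gen
  have hi := mul_left_injective_pnat n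
  have hz : ∀ k : ℕ+, k ∉ Set.range (fun m : ℕ+ => n * m) →
      ‖shiftFun n (⇑f) k‖ ^ (2 : ℝ≥0∞).toReal = 0 := by
    intro k hk
    rw [shiftFun_of_not_dvd _ (not_dvd_of_not_mem_range hk)]
    simp
  rw [← hi.summable_iff hz]
  have heq : ((fun k : ℕ+ => ‖shiftFun n (⇑f) k‖ ^ (2 : ℝ≥0∞).toReal) ∘
      (fun m : ℕ+ => n * m)) = fun m : ℕ+ => ‖f m‖ ^ (2 : ℝ≥0∞).toReal := by
    funext m
    simp [Function.comp, shiftFun_mul]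
  rw [heq]
  exact (lp.memℓp f).summable (by norm_num)

/-- Dirichlet convolution by `n^{-s}` as a linear map on `H²`. -/
def lamLin (n : ℕ+) : H2sp →ₗ[ℂ] H2sp where
  toFun f := ⟨shiftFun n ⇑f, shiftFun_memℓp n f⟩
  map_add' f g := by
    ext k
    show shiftFun n ⇑(f + g) k = shiftFun n ⇑f k + shiftFun n ⇑g k
    by_cases h : (n : ℕ) ∣ (k : ℕ)
    · simp only [shiftFun, dif_pos h]; rfl
    · simp only [shiftFun, dif_neg h, add_zero]
  map_smul' c f := by
    ext k
    show shiftFun n ⇑(c • f) k = c * shiftFun n ⇑f k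
    by_cases h : (n : ℕ) ∣ (k : ℕ)
    · simp only [shiftFun, dif_pos h]; rfl
    · simp only [shiftFun, dif_neg h, mul_zero]

lemma lamLin_coe (n : ℕ+) (f : H2sp) (k : ℕ+) : (lamLin n f) k = shiftFun n (⇑f) k := rfl

lemma lamLin_norm (n : ℕ+) (f : H2sp) : ‖lamLin n f‖ = ‖f‖ := by
  rw [lp.norm_eq_tsum_rpow (by norm_num) (lamLin n f), lp.norm_eq_tsum_rpow (by norm_num) f]
  congr 1
  have hi := mul_left_injective_pnat n
  have hsupp : (Function.support fun k : ℕ+ => ‖(lamLin n f) k‖ ^ (2 : ℝ≥0∞).toReal) ⊆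
      Set.range (fun m : ℕ+ => n * m) := by
    intro k hk
    by_contra hmem
    apply hk
    show ‖(lamLin n f) k‖ ^ (2 : ℝ≥0∞).toReal = 0
    rw [lamLin_coe, shiftFun_of_not_dvd _ (not_dvd_of_not_mem_range hmem)]
    simp
  calc ∑' k : ℕ+, ‖(lamLin n f) k‖ ^ (2 : ℝ≥0∞).toReal
      = ∑' m : ℕ+, ‖(lamLin n f) (n * m)‖ ^ (2 : ℝ≥0∞).toReal :=
        (hi.tsum_eq (f := fun k : ℕ+ => ‖(lamLin n f) k‖ ^ (2 : ℝ≥0∞).toReal) hsupp).symm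
    _ = ∑' m : ℕ+, ‖f m‖ ^ (2 : ℝ≥0∞).toReal := by
        refine tsum_congr fun m => ?_
        rw [lamLin_coe, shiftFun_mul]

/-- Dirichlet convolution by `n^{-s}`: the operator `Λ(n)` on `H²`. -/
def lamOp (n : ℕ+) : H2sp →L[ℂ] H2sp :=
  (lamLin n).mkContinuous 1 (fun f => by rw [lamLin_norm]; simp)

/-- The restriction of an operator to an invariant subspace. -/
def restrictOp (T : H2sp →L[ℂ] H2sp) (I : Submodule ℂ H2sp)
    (h : ∀ x ∈ I, T x ∈ I) : I →L[ℂ] I :=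
  { toFun := fun x => ⟨T x, h x x.2⟩
    map_add' := fun x y => Subtype.ext (by simp)
    map_smul' := fun c x => Subtype.ext (by simp)
    cont := Continuous.subtype_mk (T.continuous.comp continuous_subtype_val) _ }

/-- The Hilbert space adjoint of an operator on a closed subspace of `H²`. -/
def adjOf {I : Submodule ℂ H2sp} (hcl : IsClosed (I : Set H2sp)) (T : I →L[ℂ] I) :
    I →L[ℂ] I :=
  haveI : CompleteSpace I := hcl.completeSpace_coe
  ContinuousLinearMap.adjoint T

/-! ## Dirichlet polynomials -/

/-- The Dirichlet series `m^{-s}` (coefficient `1` at `m`, `0` elsewhere). -/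
def shiftAF (m : ℕ+) : ArithmeticFunction ℂ :=
  ⟨fun k => if k = (m : ℕ) then 1 else 0, by simp [Ne.symm m.ne_zero]⟩

/-- The constant Dirichlet series `c` (coefficient `c` at `1`, `0` elsewhere). -/
def constAF (c : ℂ) : ArithmeticFunction ℂ :=
  ⟨fun k => if k = 1 then c else 0, by simp⟩

/-- The `i`-th prime number (`nthP 0 = 2`). -/
def nthP (i : ℕ) : ℕ+ := ⟨Nat.nth Nat.Prime i, (Nat.prime_nth_prime i).pos⟩

/-- The general term `aₙ w^{α(n)} n^{-(σ + it)}` of a vertical-limit Dirichlet series. -/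
def dirTerm (a : ArithmeticFunction ℂ) (w : TInf) (t σ : ℝ) (n : ℕ+) : ℂ :=
  a n * monoT (expIdx n) w * ((n : ℕ) : ℂ) ^ (-((σ : ℂ) + (t : ℂ) * Complex.I))

/-! ## The square `(0,1)²`, double Dirichlet series, and `T^∞ × T^∞` -/

/-- Lebesgue measure restricted to the square `(0,1)²`. -/
def M2 : Measure (ℝ × ℝ) := volume.restrict ((Set.Ioo (0 : ℝ) 1) ×ˢ (Set.Ioo (0 : ℝ) 1))

/-- The extension of a function on `(0,1)²` to `ℝ²`, odd and `2`-periodic in each variable. -/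
def oddExt2 (φ : ℝ × ℝ → ℂ) (p : ℝ × ℝ) : ℂ :=
  oddExt (fun u => oddExt (fun v => φ (u, v)) p.2) p.1

/-- The double dilation system `φ_{m,n}(x,y) = φ(mx, ny)`. -/
def dil2Sys (φ : Lp ℂ 2 M2) (m n : ℕ+) : ℝ × ℝ → ℂ :=
  fun p => oddExt2 (⇑φ) ((m : ℕ) * p.1, (n : ℕ) * p.2)

/-- The orthonormal basis `e_{m,n}(x,y) = 2 sin(πmx) sin(πny)` of `L²((0,1)²)`. -/
def esin2 (m n : ℕ) (p : ℝ × ℝ) : ℂ := esin m p.1 * esin n p.2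

/-- The `L²((0,1)²)` inner product. -/
def ip2 (f g : ℝ × ℝ → ℂ) : ℂ := ∫ p, f p * conj (g p) ∂M2

/-- The coefficients `a_{m,n} = ⟨φ, e_{m,n}⟩` of the double Dirichlet series `S₂φ`. -/
def SAF2 (φ : Lp ℂ 2 M2) (m n : ℕ) : ℂ := ip2 (⇑φ) (esin2 m n)

/-- Dirichlet convolution of double Dirichlet series (through their coefficients). -/
def conv2 (a b : ℕ → ℕ → ℂ) : ℕ → ℕ → ℂ := fun m n =>
  ∑ x ∈ m.divisorsAntidiagonal, ∑ y ∈ n.divisorsAntidiagonal, a x.1 y.1 * b x.2 y.2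

/-- The unit for convolution of double Dirichlet series. -/
def one2 : ℕ → ℕ → ℂ := fun m n => if m = 1 ∧ n = 1 then 1 else 0

/-- Membership in `H²₂`: square-summable coefficients. -/
def memH2sq (a : ℕ → ℕ → ℂ) : Prop := Summable fun q : ℕ+ × ℕ+ => ‖a q.1 q.2‖ ^ 2

/-- A double Dirichlet series is a multiplier of `H²₂`. -/
def IsMultiplier2 (a : ℕ → ℕ → ℂ) : Prop := ∀ b, memH2sq b → memH2sq (conv2 a b)

/-- The double dilation system of `φ` is a Bessel sequence in `L²((0,1)²)`. -/
def IsBessel2 (φ : Lp ℂ 2 M2) : Prop :=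
  ∃ B : ℝ, 0 < B ∧ ∀ f : Lp ℂ 2 M2,
    ∑' q : ℕ+ × ℕ+, (‖ip2 (⇑f) (dil2Sys φ q.1 q.2)‖₊ : ℝ≥0∞) ^ 2 ≤
      ENNReal.ofReal B * (‖f‖₊ : ℝ≥0∞) ^ 2

/-- The double dilation system of `φ` satisfies the lower frame bound in `L²((0,1)²)`. -/
def HasLowerFrame2 (φ : Lp ℂ 2 M2) : Prop :=
  ∃ A : ℝ, 0 < A ∧ ∀ f : Lp ℂ 2 M2,
    ENNReal.ofReal A * (‖f‖₊ : ℝ≥0∞) ^ 2 ≤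
      ∑' q : ℕ+ × ℕ+, (‖ip2 (⇑f) (dil2Sys φ q.1 q.2)‖₊ : ℝ≥0∞) ^ 2

/-- `∑ |c_{m,n}|²` for a finitely supported family of scalars. -/
def sqSum2 (c : (ℕ+ × ℕ+) →₀ ℂ) : ℝ := ∑ q ∈ c.support, ‖c q‖ ^ 2

/-- A finite linear combination of the double dilation system. -/
def combo2 (φ : Lp ℂ 2 M2) (c : (ℕ+ × ℕ+) →₀ ℂ) : ℝ × ℝ → ℂ :=
  fun p => ∑ q ∈ c.support, c q * dil2Sys φ q.1 q.2 p

/-- The `L²((0,1)²)` norm of a function. -/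
def L2norm2 (g : ℝ × ℝ → ℂ) : ℝ := Real.sqrt (∫ p, ‖g p‖ ^ 2 ∂M2)

/-- The double dilation system of `φ` is a Riesz sequence in `L²((0,1)²)`. -/
def IsRieszSeq2 (φ : Lp ℂ 2 M2) : Prop :=
  ∃ A B : ℝ, 0 < A ∧ A ≤ B ∧ ∀ c : (ℕ+ × ℕ+) →₀ ℂ,
    A * Real.sqrt (sqSum2 c) ≤ L2norm2 (combo2 φ c) ∧
    L2norm2 (combo2 φ c) ≤ B * Real.sqrt (sqSum2 c)

/-- Haar probability measure on `T^∞ × T^∞`. -/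
def muT2 : Measure (TInf × TInf) := muT.prod muT

/-- Monomials on `T^∞ × T^∞`. -/
def mono2 (α β : ℕ →₀ ℤ) (p : TInf × TInf) : ℂ := monoT α p.1 * monoT β p.2

/-- Fourier coefficients on `T^∞ × T^∞`. -/
def fcoef2 (f : TInf × TInf → ℂ) (α β : ℕ →₀ ℤ) : ℂ := ∫ p, f p * conj (mono2 α β p) ∂muT2

/-- Membership in `H^∞(T^∞ × T^∞)`. -/
def memHinfT2 (f : TInf × TInf → ℂ) : Prop :=
  MemLp f ⊤ muT2 ∧
    ∀ α β : ℕ →₀ ℤ, ((∃ j, α j < 0) ∨ (∃ j, β j < 0)) → fcoef2 f α β = 0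

/-- Membership in `H²(T^∞ × T^∞)`. -/
def memH2T2 (f : TInf × TInf → ℂ) : Prop :=
  MemLp f 2 muT2 ∧
    ∀ α β : ℕ →₀ ℤ, ((∃ j, α j < 0) ∨ (∃ j, β j < 0)) → fcoef2 f α β = 0

/-- `f ∈ H²(T^∞ × T^∞)` is the Bohr lift of the double Dirichlet series with
coefficients `a`. -/
def IsBohrLift2Of (a : ℕ → ℕ → ℂ) (f : TInf × TInf → ℂ) : Prop :=
  memH2T2 f ∧ (∀ m n : ℕ+, fcoef2 f (expIdx m) (expIdx n) = a m n) ∧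
    ∀ α β : ℕ →₀ ℤ, (∀ m n : ℕ+, ¬(α = expIdx m ∧ β = expIdx n)) → fcoef2 f α β = 0

/-- Interleaving bijection `ℕ ⊕ ℕ ≃ ℕ` used to interleave coordinates. -/
def interEquiv : ℕ ⊕ ℕ ≃ ℕ where
  toFun := Sum.elim (fun j => 2 * j) (fun j => 2 * j + 1)
  invFun := fun k => if k % 2 = 0 then Sum.inl (k / 2) else Sum.inr (k / 2)
  left_inv := by
    rintro (j | j)
    · show (if 2 * j % 2 = 0 then Sum.inl (2 * j / 2) else Sum.inr (2 * j / 2)) = Sum.inl j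
      rw [if_pos (Nat.mul_mod_right 2 j)]
      exact congrArg Sum.inl (by omega)
    · show (if (2 * j + 1) % 2 = 0 then Sum.inl ((2 * j + 1) / 2)
        else Sum.inr ((2 * j + 1) / 2)) = Sum.inr j
      rw [if_neg (by omega)]
      exact congrArg Sum.inr (by omega)
  right_inv := by
    intro k
    dsimp only
    by_cases h : k % 2 = 0
    · rw [if_pos h]
      simp only [Sum.elim_inl]
      omega
    · rw [if_neg h]
      simp only [Sum.elim_inr]
      omega

/-- The interleaving of two multi-indices: `(α, β) ↦ (α₁, β₁, α₂, β₂, …)`. -/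
def interIdx (α β : ℕ →₀ ℤ) : ℕ →₀ ℤ :=
  Finsupp.equivMapDomain interEquiv (Finsupp.sumElim α β)

/-- The interleaving homeomorphism `T^∞ × T^∞ → T^∞`,
`((x_i), (y_i)) ↦ (x₁, y₁, x₂, y₂, …)`. -/
def interMap (p : TInf × TInf) : TInf :=
  fun k => if k % 2 = 0 then p.1 (k / 2) else p.2 (k / 2)

theorem _root_.Set.surjOn_mul_left_iff {M : Type*} [CommMonoid M] {S : Set M} (hS : 1 ∈ S)
    (a : M) : SurjOn (a * ·) S S ↔ ∃ b, a * b = 1 ∧ MapsTo (b * ·) S S := by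
  constructor
  · intro hsurj
    obtain ⟨b, -, hab⟩ := hsurj hS
    refine ⟨b, hab, fun d hd => ?_⟩
    obtain ⟨e, he, rfl⟩ := hsurj hd
    simpa only [← mul_assoc, mul_comm b a, hab, one_mul] using he
  · rintro ⟨b, hab, hb⟩ d hd
    exact ⟨b * d, hb hd, by simp only [← mul_assoc, hab, one_mul]⟩

lemma memH2AF_one : memH2AF 1 := by
  refine summable_of_ne_finset_zero (s := {1}) fun n hn => ?_
  simp [ArithmeticFunction.one_apply_ne (Finset.notMem_singleton.mp hn)]

lemma _root_.ArithmeticFunction.apply_one_ne_zero_of_mul_eq_one {R : Type*} [CommRing R]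
    [Nontrivial R] {a b : ArithmeticFunction R} (h : a * b = 1) : a 1 ≠ 0 :=
  (ArithmeticFunction.isUnit_iff_isUnit_apply_one.mp (.of_mul_eq_one b h)).ne_zero

/-- `M_{Sφ} : Dom(M_{Sφ}) → H²` is surjective iff `a₁ ≠ 0` and `1/Sφ` is a
multiplier of `H²`. -/
theorem stmt_9 (φ : Lp ℂ 2 M01) :
    (∀ D : ArithmeticFunction ℂ, memH2AF D →
      ∃ E : ArithmeticFunction ℂ, memH2AF E ∧ SAF φ * E = D) ↔
    (SAF φ 1 ≠ 0 ∧ ∃ B : ArithmeticFunction ℂ, SAF φ * B = 1 ∧ IsMultiplierAF B) := by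
  -- Unfolded, the left side is `SurjOn (SAF φ * ·) H² H²` and `IsMultiplierAF B` is
  -- `MapsTo (B * ·) H² H²`.
  have hsurj := Set.surjOn_mul_left_iff (S := {D | memH2AF D}) memH2AF_one (SAF φ)
  constructor
  · intro h
    obtain ⟨B, hB, hBmul⟩ := hsurj.mp h
    exact ⟨ArithmeticFunction.apply_one_ne_zero_of_mul_eq_one hB, B, hB, hBmul⟩
  · rintro ⟨-, hinv⟩
    exact hsurj.mpr hinv

end DilationDirichlet
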